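/- arXiv:2206.07737 — 4 statements merged into one kernel-verified Lean document; each statement's English description precedes it below -/
import Mathlib

section
/- Let H_a and H_b be symmetric positive-semidefinite real d×d matrices with maximum eigenvalues λ_a and λ_b respectively, and let g_{D_a}, g_{D_b} be nonzero vectors. Then the gap in direction-error excessive risk satisfies R^dir_a − R^dir_b ≥ η_t ( ‖g_{D_a}‖·E[‖ḡ_B‖(cos θ_B^a − cos θ̄_B^a)] − ‖g_{D_b}‖·E[‖ḡ_B‖(cos θ_B^b − cos θ̄_B^b)] ) − (η_t²/2)(λ_a + λ_b)·E[‖ḡ_B‖²]. -/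
open MeasureTheory

/-- For symmetric PSD Hessians `H_a, H_b` with maximum eigenvalues
`λ_a, λ_b`, the gap in direction-error excessive risk satisfies
`R^dir_a − R^dir_b ≥ η (‖g_{D_a}‖ E[‖ḡ_B‖(cos θ^a − cos θ̄^a)] − ‖g_{D_b}‖ E[‖ḡ_B‖(cos θ^b − cos θ̄^b)])
  − (η²/2)(λ_a + λ_b) E[‖ḡ_B‖²]`. -/
theorem dir_risk_gap_lower_bound
    {d : ℕ} {Ω : Type*} [MeasurableSpace Ω] (P : Measure Ω) [IsProbabilityMeasure P]
    (g : Ω → EuclideanSpace ℝ (Fin d))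
    (M : Ω → (EuclideanSpace ℝ (Fin d) →ₗ[ℝ] EuclideanSpace ℝ (Fin d)))
    (c : Ω → ℝ)
    (Ha Hb : EuclideanSpace ℝ (Fin d) →ₗ[ℝ] EuclideanSpace ℝ (Fin d))
    (lama lamb : ℝ)
    (ga gb : EuclideanSpace ℝ (Fin d)) (hga : ga ≠ 0) (hgb : gb ≠ 0)
    (η : ℝ) (hη : 0 < η)
    (hg0 : ∀ᵐ ω ∂P, g ω ≠ 0)
    (hc : ∀ ω, 0 ≤ c ω)
    (horth : ∀ ω x y, (inner ℝ (M ω x) (M ω y) : ℝ) = inner ℝ x y)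
    (hsyma : ∀ x y, (inner ℝ (Ha x) y : ℝ) = (inner ℝ x (Ha y) : ℝ))
    (hsymb : ∀ x y, (inner ℝ (Hb x) y : ℝ) = (inner ℝ x (Hb y) : ℝ))
    (hpsda : ∀ x, 0 ≤ (inner ℝ x (Ha x) : ℝ))
    (hpsdb : ∀ x, 0 ≤ (inner ℝ x (Hb x) : ℝ))
    (hlama : ∀ x : EuclideanSpace ℝ (Fin d), (inner ℝ x (Ha x) : ℝ) ≤ lama * ‖x‖ ^ 2)
    (hlamb : ∀ x : EuclideanSpace ℝ (Fin d), (inner ℝ x (Hb x) : ℝ) ≤ lamb * ‖x‖ ^ 2)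
    (hint_v : Integrable (fun ω => c ω • (g ω - M ω (g ω))) P)
    (hint_qa : Integrable (fun ω => c ω ^ 2 *
        ((inner ℝ (M ω (g ω)) (Ha (M ω (g ω))) : ℝ) - (inner ℝ (g ω) (Ha (g ω)) : ℝ))) P)
    (hint_qb : Integrable (fun ω => c ω ^ 2 *
        ((inner ℝ (M ω (g ω)) (Hb (M ω (g ω))) : ℝ) - (inner ℝ (g ω) (Hb (g ω)) : ℝ))) P)
    (hint_norm : Integrable (fun ω => ‖c ω • M ω (g ω)‖ ^ 2) P)
    (hint_cosa : Integrable (fun ω => ‖c ω • M ω (g ω)‖ *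
        ((inner ℝ ga (g ω) : ℝ) / (‖ga‖ * ‖g ω‖)
          - (inner ℝ ga (M ω (g ω)) : ℝ) / (‖ga‖ * ‖M ω (g ω)‖))) P)
    (hint_cosb : Integrable (fun ω => ‖c ω • M ω (g ω)‖ *
        ((inner ℝ gb (g ω) : ℝ) / (‖gb‖ * ‖g ω‖)
          - (inner ℝ gb (M ω (g ω)) : ℝ) / (‖gb‖ * ‖M ω (g ω)‖))) P) :
    -- R^dir_a − R^dir_b ≥ ...
    (η * (inner ℝ ga (∫ ω, c ω • (g ω - M ω (g ω)) ∂P) : ℝ)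
        + η ^ 2 / 2 * ∫ ω, c ω ^ 2 *
            ((inner ℝ (M ω (g ω)) (Ha (M ω (g ω))) : ℝ) - (inner ℝ (g ω) (Ha (g ω)) : ℝ)) ∂P)
      - (η * (inner ℝ gb (∫ ω, c ω • (g ω - M ω (g ω)) ∂P) : ℝ)
        + η ^ 2 / 2 * ∫ ω, c ω ^ 2 *
            ((inner ℝ (M ω (g ω)) (Hb (M ω (g ω))) : ℝ) - (inner ℝ (g ω) (Hb (g ω)) : ℝ)) ∂P)
    ≥ η * (‖ga‖ * ∫ ω, ‖c ω • M ω (g ω)‖ *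
            ((inner ℝ ga (g ω) : ℝ) / (‖ga‖ * ‖g ω‖)
              - (inner ℝ ga (M ω (g ω)) : ℝ) / (‖ga‖ * ‖M ω (g ω)‖)) ∂P
          - ‖gb‖ * ∫ ω, ‖c ω • M ω (g ω)‖ *
            ((inner ℝ gb (g ω) : ℝ) / (‖gb‖ * ‖g ω‖)
              - (inner ℝ gb (M ω (g ω)) : ℝ) / (‖gb‖ * ‖M ω (g ω)‖)) ∂P)
        - η ^ 2 / 2 * (lama + lamb) * ∫ ω, ‖c ω • M ω (g ω)‖ ^ 2 ∂P := by
  -- norm preservation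
  have hnorm : ∀ ω, ‖M ω (g ω)‖ = ‖g ω‖ := by
    intro ω
    have h2 : ‖M ω (g ω)‖ ^ 2 = ‖g ω‖ ^ 2 := by
      rw [← real_inner_self_eq_norm_sq, ← real_inner_self_eq_norm_sq]
      exact horth ω _ _
    have := congrArg Real.sqrt h2
    rwa [Real.sqrt_sq (norm_nonneg _), Real.sqrt_sq (norm_nonneg _)] at this
  have hns : ∀ ω, ‖c ω • M ω (g ω)‖ = c ω * ‖g ω‖ := by
    intro ω
    rw [norm_smul, hnorm, Real.norm_eq_abs, abs_of_nonneg (hc ω)]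
  -- first-order equalities
  have key : ∀ (v : EuclideanSpace ℝ (Fin d)), v ≠ 0 →
      (inner ℝ v (∫ ω, c ω • (g ω - M ω (g ω)) ∂P) : ℝ)
        = ‖v‖ * ∫ ω, ‖c ω • M ω (g ω)‖ *
            ((inner ℝ v (g ω) : ℝ) / (‖v‖ * ‖g ω‖)
              - (inner ℝ v (M ω (g ω)) : ℝ) / (‖v‖ * ‖M ω (g ω)‖)) ∂P := by
    intro v hv
    rw [← integral_inner hint_v v, ← integral_const_mul]
    apply integral_congr_ae
    filter_upwards [hg0] with ω hω
    have hvn : ‖v‖ ≠ 0 := norm_ne_zero_iff.mpr hv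
    have hgn : ‖g ω‖ ≠ 0 := norm_ne_zero_iff.mpr hω
    rw [inner_smul_right, inner_sub_right, hns ω, hnorm ω]
    field_simp
  have keya := key ga hga
  have keyb := key gb hgb
  -- second-order bounds
  have hnsq : ∀ ω, ‖c ω • M ω (g ω)‖ ^ 2 = c ω ^ 2 * ‖g ω‖ ^ 2 := by
    intro ω; rw [hns ω, mul_pow]
  have hA : (-lama) * ∫ ω, ‖c ω • M ω (g ω)‖ ^ 2 ∂P
      ≤ ∫ ω, c ω ^ 2 *
          ((inner ℝ (M ω (g ω)) (Ha (M ω (g ω))) : ℝ) - (inner ℝ (g ω) (Ha (g ω)) : ℝ)) ∂P := by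
    rw [← integral_const_mul]
    refine integral_mono (hint_norm.const_mul _) hint_qa (fun ω => ?_)
    have h1 := hpsda (M ω (g ω))
    have h2 := hlama (g ω)
    rw [hnsq ω]
    nlinarith [mul_le_mul_of_nonneg_left h2 (sq_nonneg (c ω)),
      mul_nonneg (sq_nonneg (c ω)) h1]
  have hB : (∫ ω, c ω ^ 2 *
          ((inner ℝ (M ω (g ω)) (Hb (M ω (g ω))) : ℝ) - (inner ℝ (g ω) (Hb (g ω)) : ℝ)) ∂P)
      ≤ lamb * ∫ ω, ‖c ω • M ω (g ω)‖ ^ 2 ∂P := by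
    rw [← integral_const_mul]
    refine integral_mono hint_qb (hint_norm.const_mul _) (fun ω => ?_)
    have h1 := hpsdb (g ω)
    have h2 := hlamb (M ω (g ω))
    rw [hnsq ω]
    rw [hnorm ω] at h2
    nlinarith [mul_le_mul_of_nonneg_left h2 (sq_nonneg (c ω)),
      mul_nonneg (sq_nonneg (c ω)) h1]
  rw [keya, keyb]
  nlinarith [sq_nonneg η, hA, hB]
end

section
/- (Proposition 3 of the paper.) Let H_a and H_b be symmetric positive-semidefinite real d×d matrices with maximum eigenvalues λ_a, λ_b > 0, let g_{D_a}, g_{D_b} be nonzero vectors, and assume η_t ≤ 1/max(λ_a, λ_b). If E[‖ḡ_B‖ (cos θ_B^a − cos θ̄_B^a)] > (‖g_{D_b}‖/‖g_{D_a}‖)·E[‖ḡ_B‖ (cos θ_B^b − cos θ̄_B^b)] + E[‖ḡ_B‖²]/‖g_{D_a}‖, then the direction-error excessive risks satisfy R^dir_a > R^dir_b. -/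
/-!
Both the first-order and the second-order part of `R^dir_k` are controlled pointwise. Since `M_B`
preserves norms, `c_B ⟨u, g_B - M_B g_B⟩ = ‖u‖ ‖ḡ_B‖ (cos ∠(u, g_B) - cos ∠(u, M_B g_B))`, so the
first-order term is `η ‖g_{D_k}‖` times the expected cosine gap. The Hessian term compares two
quadratic forms in vectors of the same norm, each in `[0, λ_k ‖·‖²]`, so it is at most
`λ_k E[‖ḡ_B‖²]` in absolute value. The hypothesis makes the first-order gap exceed `E[‖ḡ_B‖²]`,
and `η max(λ_a, λ_b) ≤ 1` lets that margin absorb both Hessian terms.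
-/

open MeasureTheory

section InnerProductSpace

variable {E : Type*} [NormedAddCommGroup E] [InnerProductSpace ℝ E]

theorem LinearMap.norm_map_of_inner_map_map {F : Type*} [NormedAddCommGroup F]
    [InnerProductSpace ℝ F] {f : E →ₗ[ℝ] F}
    (hf : ∀ x y, (inner ℝ (f x) (f y) : ℝ) = inner ℝ x y) (x : E) : ‖f x‖ = ‖x‖ :=
  (f.isometryOfInner hf).norm_map x

theorem inner_smul_sub_eq_norm_mul_cos_sub {c : ℝ} (hc : 0 ≤ c) {x y : E} (hxy : ‖y‖ = ‖x‖)
    (u : E) :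
    (inner ℝ u (c • (x - y)) : ℝ) =
      ‖u‖ * (‖c • y‖ * ((inner ℝ u x : ℝ) / (‖u‖ * ‖x‖) - (inner ℝ u y : ℝ) / (‖u‖ * ‖y‖))) := by
  rcases eq_or_ne x 0 with rfl | hx
  · obtain rfl : y = 0 := norm_eq_zero.mp (hxy.trans norm_zero)
    simp
  rcases eq_or_ne u 0 with rfl | hu
  · simp
  have hx₀ : ‖x‖ ≠ 0 := norm_ne_zero_iff.mpr hx
  have hu₀ : ‖u‖ ≠ 0 := norm_ne_zero_iff.mpr hu
  rw [real_inner_smul_right, inner_sub_right, norm_smul, Real.norm_of_nonneg hc, hxy]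
  field_simp

theorem abs_inner_map_self_sub_le {H : E →ₗ[ℝ] E} {lam : ℝ}
    (hpsd : ∀ z, 0 ≤ (inner ℝ z (H z) : ℝ)) (hle : ∀ z, (inner ℝ z (H z) : ℝ) ≤ lam * ‖z‖ ^ 2)
    {x y : E} (hxy : ‖y‖ = ‖x‖) :
    |(inner ℝ y (H y) : ℝ) - inner ℝ x (H x)| ≤ lam * ‖x‖ ^ 2 :=
  abs_sub_le_of_nonneg_of_le (hpsd y) (hxy ▸ hle y) (hpsd x) (hle x)

end InnerProductSpace

section Expectation

variable {Ω E : Type*} [MeasurableSpace Ω] {P : Measure Ω}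
  [NormedAddCommGroup E] [InnerProductSpace ℝ E]
  {g : Ω → E} {M : Ω → E →ₗ[ℝ] E} {c : Ω → ℝ}

theorem inner_integral_smul_sub_eq_norm_mul_integral_cos_sub [CompleteSpace E] (hc : ∀ ω, 0 ≤ c ω)
    (hM : ∀ ω, ‖M ω (g ω)‖ = ‖g ω‖) (hint : Integrable (fun ω => c ω • (g ω - M ω (g ω))) P)
    (u : E) :
    (inner ℝ u (∫ ω, c ω • (g ω - M ω (g ω)) ∂P) : ℝ) =
      ‖u‖ * ∫ ω, ‖c ω • M ω (g ω)‖ *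
        ((inner ℝ u (g ω) : ℝ) / (‖u‖ * ‖g ω‖)
          - (inner ℝ u (M ω (g ω)) : ℝ) / (‖u‖ * ‖M ω (g ω)‖)) ∂P := by
  simp_rw [← integral_inner hint, inner_smul_sub_eq_norm_mul_cos_sub (hc _) (hM _) u,
    integral_const_mul]

theorem abs_integral_sq_mul_inner_map_self_sub_le {H : E →ₗ[ℝ] E} {lam : ℝ}
    (hpsd : ∀ z, 0 ≤ (inner ℝ z (H z) : ℝ)) (hle : ∀ z, (inner ℝ z (H z) : ℝ) ≤ lam * ‖z‖ ^ 2)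
    (hM : ∀ ω, ‖M ω (g ω)‖ = ‖g ω‖) (hint : Integrable (fun ω => ‖c ω • M ω (g ω)‖ ^ 2) P) :
    |∫ ω, c ω ^ 2 *
        ((inner ℝ (M ω (g ω)) (H (M ω (g ω))) : ℝ) - inner ℝ (g ω) (H (g ω))) ∂P|
      ≤ lam * ∫ ω, ‖c ω • M ω (g ω)‖ ^ 2 ∂P := by
  rw [← Real.norm_eq_abs, ← integral_const_mul]
  refine norm_integral_le_of_norm_le (hint.const_mul lam) (Filter.Eventually.of_forall fun ω => ?_)
  rw [Real.norm_eq_abs, abs_mul, abs_sq, norm_smul, hM, mul_pow, Real.norm_eq_abs, sq_abs,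
    mul_left_comm]
  exact mul_le_mul_of_nonneg_left (abs_inner_map_self_sub_le hpsd hle (hM ω)) (sq_nonneg _)

end Expectation

theorem mul_add_sq_mul_lt_of_add_lt {η la lb A B Qa Qb N : ℝ} (hη : 0 < η)
    (hηle : η * max la lb ≤ 1) (hN : 0 ≤ N) (hAB : B + N < A)
    (hQa : |Qa| ≤ la * N) (hQb : |Qb| ≤ lb * N) :
    η * B + η ^ 2 / 2 * Qb < η * A + η ^ 2 / 2 * Qa := by
  have hQ : Qb - Qa ≤ 2 * max la lb * N := by
    nlinarith [le_abs_self Qb, neg_abs_le Qa, le_max_left la lb, le_max_right la lb]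
  have hηQ : η * (Qb - Qa) ≤ 2 * N := by nlinarith
  nlinarith

theorem dir_risk_comparison_general
    {d : ℕ} {Ω : Type*} [MeasurableSpace Ω] (P : Measure Ω)
    (g : Ω → EuclideanSpace ℝ (Fin d))
    (M : Ω → (EuclideanSpace ℝ (Fin d) →ₗ[ℝ] EuclideanSpace ℝ (Fin d)))
    (c : Ω → ℝ)
    (Ha Hb : EuclideanSpace ℝ (Fin d) →ₗ[ℝ] EuclideanSpace ℝ (Fin d))
    (lama lamb : ℝ)
    (ga gb : EuclideanSpace ℝ (Fin d)) (hga : ga ≠ 0)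
    (η : ℝ) (hη : 0 < η) (hηle : η ≤ 1 / max lama lamb)
    (hc : ∀ ω, 0 ≤ c ω)
    (horth : ∀ ω x y, (inner ℝ (M ω x) (M ω y) : ℝ) = inner ℝ x y)
    (hpsda : ∀ x, 0 ≤ (inner ℝ x (Ha x) : ℝ))
    (hpsdb : ∀ x, 0 ≤ (inner ℝ x (Hb x) : ℝ))
    (hlama : ∀ x : EuclideanSpace ℝ (Fin d), (inner ℝ x (Ha x) : ℝ) ≤ lama * ‖x‖ ^ 2)
    (hlamb : ∀ x : EuclideanSpace ℝ (Fin d), (inner ℝ x (Hb x) : ℝ) ≤ lamb * ‖x‖ ^ 2)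
    (hint_v : Integrable (fun ω => c ω • (g ω - M ω (g ω))) P)
    (hint_norm : Integrable (fun ω => ‖c ω • M ω (g ω)‖ ^ 2) P)
    (hcond :
      (∫ ω, ‖c ω • M ω (g ω)‖ *
          ((inner ℝ ga (g ω) : ℝ) / (‖ga‖ * ‖g ω‖)
            - (inner ℝ ga (M ω (g ω)) : ℝ) / (‖ga‖ * ‖M ω (g ω)‖)) ∂P)
        > (‖gb‖ / ‖ga‖) * (∫ ω, ‖c ω • M ω (g ω)‖ *
            ((inner ℝ gb (g ω) : ℝ) / (‖gb‖ * ‖g ω‖)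
              - (inner ℝ gb (M ω (g ω)) : ℝ) / (‖gb‖ * ‖M ω (g ω)‖)) ∂P)
          + (∫ ω, ‖c ω • M ω (g ω)‖ ^ 2 ∂P) / ‖ga‖) :
    (η * (inner ℝ ga (∫ ω, c ω • (g ω - M ω (g ω)) ∂P) : ℝ)
        + η ^ 2 / 2 * ∫ ω, c ω ^ 2 *
            ((inner ℝ (M ω (g ω)) (Ha (M ω (g ω))) : ℝ) - (inner ℝ (g ω) (Ha (g ω)) : ℝ)) ∂P)
      > (η * (inner ℝ gb (∫ ω, c ω • (g ω - M ω (g ω)) ∂P) : ℝ)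
        + η ^ 2 / 2 * ∫ ω, c ω ^ 2 *
            ((inner ℝ (M ω (g ω)) (Hb (M ω (g ω))) : ℝ) - (inner ℝ (g ω) (Hb (g ω)) : ℝ)) ∂P) := by
  have hM : ∀ ω, ‖M ω (g ω)‖ = ‖g ω‖ := fun ω => (M ω).norm_map_of_inner_map_map (horth ω) _
  have hmax : 0 < max lama lamb := one_div_pos.mp (hη.trans_le hηle)
  have hga₀ : 0 < ‖ga‖ := norm_pos_iff.mpr hga
  simp only [inner_integral_smul_sub_eq_norm_mul_integral_cos_sub hc hM hint_v]
  refine mul_add_sq_mul_lt_of_add_lt hη ((le_div_iff₀ hmax).mp hηle)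
    (integral_nonneg fun ω => by positivity) ?_
    (abs_integral_sq_mul_inner_map_self_sub_le hpsda hlama hM hint_norm)
    (abs_integral_sq_mul_inner_map_self_sub_le hpsdb hlamb hM hint_norm)
  have := mul_lt_mul_of_pos_left hcond hga₀
  rwa [mul_add, ← mul_assoc, mul_div_cancel₀ _ hga₀.ne', mul_div_cancel₀ _ hga₀.ne'] at this

/-- **Proposition 3 of the paper.** If
`E[‖ḡ_B‖(cos θ^a − cos θ̄^a)] > (‖g_{D_b}‖/‖g_{D_a}‖) E[‖ḡ_B‖(cos θ^b − cos θ̄^b)]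
  + E[‖ḡ_B‖²]/‖g_{D_a}‖`, then `R^dir_a > R^dir_b`. -/
theorem dir_risk_comparison
    {d : ℕ} {Ω : Type*} [MeasurableSpace Ω] (P : Measure Ω) [IsProbabilityMeasure P]
    (g : Ω → EuclideanSpace ℝ (Fin d))
    (M : Ω → (EuclideanSpace ℝ (Fin d) →ₗ[ℝ] EuclideanSpace ℝ (Fin d)))
    (c : Ω → ℝ)
    (Ha Hb : EuclideanSpace ℝ (Fin d) →ₗ[ℝ] EuclideanSpace ℝ (Fin d))
    (lama lamb : ℝ) (hlama0 : 0 < lama) (hlamb0 : 0 < lamb)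
    (ga gb : EuclideanSpace ℝ (Fin d)) (hga : ga ≠ 0) (hgb : gb ≠ 0)
    (η : ℝ) (hη : 0 < η) (hηle : η ≤ 1 / max lama lamb)
    (hg0 : ∀ᵐ ω ∂P, g ω ≠ 0)
    (hc : ∀ ω, 0 ≤ c ω)
    (horth : ∀ ω x y, (inner ℝ (M ω x) (M ω y) : ℝ) = inner ℝ x y)
    (hsyma : ∀ x y, (inner ℝ (Ha x) y : ℝ) = (inner ℝ x (Ha y) : ℝ))
    (hsymb : ∀ x y, (inner ℝ (Hb x) y : ℝ) = (inner ℝ x (Hb y) : ℝ))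
    (hpsda : ∀ x, 0 ≤ (inner ℝ x (Ha x) : ℝ))
    (hpsdb : ∀ x, 0 ≤ (inner ℝ x (Hb x) : ℝ))
    (hlama : ∀ x : EuclideanSpace ℝ (Fin d), (inner ℝ x (Ha x) : ℝ) ≤ lama * ‖x‖ ^ 2)
    (hlamb : ∀ x : EuclideanSpace ℝ (Fin d), (inner ℝ x (Hb x) : ℝ) ≤ lamb * ‖x‖ ^ 2)
    (hint_v : Integrable (fun ω => c ω • (g ω - M ω (g ω))) P)
    (hint_qa : Integrable (fun ω => c ω ^ 2 *
        ((inner ℝ (M ω (g ω)) (Ha (M ω (g ω))) : ℝ) - (inner ℝ (g ω) (Ha (g ω)) : ℝ))) P)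
    (hint_qb : Integrable (fun ω => c ω ^ 2 *
        ((inner ℝ (M ω (g ω)) (Hb (M ω (g ω))) : ℝ) - (inner ℝ (g ω) (Hb (g ω)) : ℝ))) P)
    (hint_norm : Integrable (fun ω => ‖c ω • M ω (g ω)‖ ^ 2) P)
    (hint_cosa : Integrable (fun ω => ‖c ω • M ω (g ω)‖ *
        ((inner ℝ ga (g ω) : ℝ) / (‖ga‖ * ‖g ω‖)
          - (inner ℝ ga (M ω (g ω)) : ℝ) / (‖ga‖ * ‖M ω (g ω)‖))) P)
    (hint_cosb : Integrable (fun ω => ‖c ω • M ω (g ω)‖ *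
        ((inner ℝ gb (g ω) : ℝ) / (‖gb‖ * ‖g ω‖)
          - (inner ℝ gb (M ω (g ω)) : ℝ) / (‖gb‖ * ‖M ω (g ω)‖))) P)
    (hcond :
      (∫ ω, ‖c ω • M ω (g ω)‖ *
          ((inner ℝ ga (g ω) : ℝ) / (‖ga‖ * ‖g ω‖)
            - (inner ℝ ga (M ω (g ω)) : ℝ) / (‖ga‖ * ‖M ω (g ω)‖)) ∂P)
        > (‖gb‖ / ‖ga‖) * (∫ ω, ‖c ω • M ω (g ω)‖ *
            ((inner ℝ gb (g ω) : ℝ) / (‖gb‖ * ‖g ω‖)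
              - (inner ℝ gb (M ω (g ω)) : ℝ) / (‖gb‖ * ‖M ω (g ω)‖)) ∂P)
          + (∫ ω, ‖c ω • M ω (g ω)‖ ^ 2 ∂P) / ‖ga‖) :
    (η * (inner ℝ ga (∫ ω, c ω • (g ω - M ω (g ω)) ∂P) : ℝ)
        + η ^ 2 / 2 * ∫ ω, c ω ^ 2 *
            ((inner ℝ (M ω (g ω)) (Ha (M ω (g ω))) : ℝ) - (inner ℝ (g ω) (Ha (g ω)) : ℝ)) ∂P)
      > (η * (inner ℝ gb (∫ ω, c ω • (g ω - M ω (g ω)) ∂P) : ℝ)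
        + η ^ 2 / 2 * ∫ ω, c ω ^ 2 *
            ((inner ℝ (M ω (g ω)) (Hb (M ω (g ω))) : ℝ) - (inner ℝ (g ω) (Hb (g ω)) : ℝ)) ∂P) :=
  dir_risk_comparison_general P g M c Ha Hb lama lamb ga gb hga η hη hηle hc horth hpsda hpsdb hlama
    hlamb hint_v hint_norm hcond
end

section
/- (Proposition 2* of the paper: alternate decomposition.) Assume c_B > 0 almost surely. Then the excessive risk due to clipping decomposes exactly as R^clip_a = R^mag*_a + R^dir*_a, where R^dir*_a := η_t ⟨g_{D_a}, E[g_B − M_B g_B]⟩ + (η_t²/2) E[⟨M_B g_B, H_a (M_B g_B)⟩ − ⟨g_B, H_a g_B⟩] is a pure direction-error term and R^mag*_a := η_t ⟨g_{D_a}, E[(1/c_B − 1) ḡ_B]⟩ + (η_t²/2) E[(1 − 1/c_B²) ⟨ḡ_B, H_a ḡ_B⟩] is the residual magnitude-error term. -/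
open MeasureTheory

/-- **Proposition 2\* of the paper.** Assuming `c_B > 0` a.s., the excessive
risk due to clipping decomposes exactly as `R^clip_a = R^mag*_a + R^dir*_a`, where `R^dir*_a`
is a pure direction-error term and `R^mag*_a` is the residual magnitude-error term. -/
theorem clip_risk_alternate_decomposition
    {d : ℕ} {Ω : Type*} [MeasurableSpace Ω] (P : Measure Ω) [IsProbabilityMeasure P]
    (g : Ω → EuclideanSpace ℝ (Fin d))
    (M : Ω → (EuclideanSpace ℝ (Fin d) →ₗ[ℝ] EuclideanSpace ℝ (Fin d)))
    (c : Ω → ℝ)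
    (H : EuclideanSpace ℝ (Fin d) →ₗ[ℝ] EuclideanSpace ℝ (Fin d))
    (ga : EuclideanSpace ℝ (Fin d)) (η : ℝ) (hη : 0 < η)
    (hc : ∀ᵐ ω ∂P, 0 < c ω)
    (horth : ∀ ω x y, (inner ℝ (M ω x) (M ω y) : ℝ) = inner ℝ x y)
    (hint_g : Integrable g P)
    (hint_Mg : Integrable (fun ω => M ω (g ω)) P)
    (hint_cMg : Integrable (fun ω => c ω • M ω (g ω)) P)
    (hint_inv : Integrable (fun ω => (1 / c ω - 1) • (c ω • M ω (g ω))) P)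
    (hint_q : Integrable (fun ω => (inner ℝ (g ω) (H (g ω)) : ℝ)) P)
    (hint_Mq : Integrable (fun ω => (inner ℝ (M ω (g ω)) (H (M ω (g ω))) : ℝ)) P)
    (hint_cMq : Integrable (fun ω =>
        (inner ℝ (c ω • M ω (g ω)) (H (c ω • M ω (g ω))) : ℝ)) P)
    (hint_invq : Integrable (fun ω => (1 - 1 / c ω ^ 2) *
        (inner ℝ (c ω • M ω (g ω)) (H (c ω • M ω (g ω))) : ℝ)) P) :
    -- R^clip_a
    η * (inner ℝ ga (∫ ω, (g ω - c ω • M ω (g ω)) ∂P) : ℝ)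
      + η ^ 2 / 2 *
        ((∫ ω, (inner ℝ (c ω • M ω (g ω)) (H (c ω • M ω (g ω))) : ℝ) ∂P)
          - ∫ ω, (inner ℝ (g ω) (H (g ω)) : ℝ) ∂P)
    = -- R^mag*_a
      (η * (inner ℝ ga (∫ ω, (1 / c ω - 1) • (c ω • M ω (g ω)) ∂P) : ℝ)
        + η ^ 2 / 2 * ∫ ω, (1 - 1 / c ω ^ 2) *
            (inner ℝ (c ω • M ω (g ω)) (H (c ω • M ω (g ω))) : ℝ) ∂P)
      -- R^dir*_a
      + (η * (inner ℝ ga (∫ ω, (g ω - M ω (g ω)) ∂P) : ℝ)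
        + η ^ 2 / 2 * ∫ ω,
            ((inner ℝ (M ω (g ω)) (H (M ω (g ω))) : ℝ) - (inner ℝ (g ω) (H (g ω)) : ℝ)) ∂P) := by

  have h1 : ∫ ω, (1 / c ω - 1) • (c ω • M ω (g ω)) ∂P
      = ∫ ω, (M ω (g ω) - c ω • M ω (g ω)) ∂P := by
    refine integral_congr_ae (hc.mono fun ω hω => ?_)
    have hne : c ω ≠ 0 := ne_of_gt hω
    dsimp only
    rw [smul_smul]
    have : (1 / c ω - 1) * c ω = 1 - c ω := by field_simp
    rw [this, sub_smul, one_smul]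
  have h2 : ∫ ω, (1 - 1 / c ω ^ 2) *
        (inner ℝ (c ω • M ω (g ω)) (H (c ω • M ω (g ω))) : ℝ) ∂P
      = ∫ ω, ((inner ℝ (c ω • M ω (g ω)) (H (c ω • M ω (g ω))) : ℝ)
          - (inner ℝ (M ω (g ω)) (H (M ω (g ω))) : ℝ)) ∂P := by
    refine integral_congr_ae (hc.mono fun ω hω => ?_)
    have hne : c ω ≠ 0 := ne_of_gt hω
    have hq : (inner ℝ (c ω • M ω (g ω)) (H (c ω • M ω (g ω))) : ℝ)
        = c ω ^ 2 * (inner ℝ (M ω (g ω)) (H (M ω (g ω))) : ℝ) := by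
      rw [LinearMap.map_smul, real_inner_smul_left, real_inner_smul_right]; ring
    dsimp only
    rw [hq]; field_simp
  rw [h1, h2,
    integral_sub hint_Mg hint_cMg,
    integral_sub hint_cMq hint_Mq,
    integral_sub hint_g hint_cMg,
    integral_sub hint_g hint_Mg,
    integral_sub hint_Mq hint_q]
  simp only [inner_sub_right]
  ring
end

section
/- (Proposition 3* of the paper, for the alternate decomposition.) Let H_a and H_b be symmetric positive-semidefinite real d×d matrices with maximum eigenvalues λ_a, λ_b > 0, let g_{D_a}, g_{D_b} be nonzero vectors, and assume η_t ≤ 1/max(λ_a, λ_b). If E[‖g_B‖ (cos θ_B^a − cos θ̄_B^a)] > (‖g_{D_b}‖/‖g_{D_a}‖)·E[‖g_B‖ (cos θ_B^b − cos θ̄_B^b)] + E[‖g_B‖²]/‖g_{D_a}‖, then the pure direction-error excessive risks satisfy R^dir*_a > R^dir*_b. -/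
set_option maxHeartbeats 1000000


open MeasureTheory

/-- **Proposition 3\* of the paper.** For the pure direction-error terms
`R^dir*_k`, if `E[‖g_B‖(cos θ^a − cos θ̄^a)] > (‖g_{D_b}‖/‖g_{D_a}‖) E[‖g_B‖(cos θ^b − cos θ̄^b)]
  + E[‖g_B‖²]/‖g_{D_a}‖`, then `R^dir*_a > R^dir*_b`. -/
theorem pure_dir_risk_comparison
    {d : ℕ} {Ω : Type*} [MeasurableSpace Ω] (P : Measure Ω) [IsProbabilityMeasure P]
    (g : Ω → EuclideanSpace ℝ (Fin d))
    (M : Ω → (EuclideanSpace ℝ (Fin d) →ₗ[ℝ] EuclideanSpace ℝ (Fin d)))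
    (Ha Hb : EuclideanSpace ℝ (Fin d) →ₗ[ℝ] EuclideanSpace ℝ (Fin d))
    (lama lamb : ℝ) (hlama0 : 0 < lama) (hlamb0 : 0 < lamb)
    (ga gb : EuclideanSpace ℝ (Fin d)) (hga : ga ≠ 0) (hgb : gb ≠ 0)
    (η : ℝ) (hη : 0 < η) (hηle : η ≤ 1 / max lama lamb)
    (hg0 : ∀ᵐ ω ∂P, g ω ≠ 0)
    (horth : ∀ ω x y, (inner ℝ (M ω x) (M ω y) : ℝ) = inner ℝ x y)
    (hsyma : ∀ x y, (inner ℝ (Ha x) y : ℝ) = (inner ℝ x (Ha y) : ℝ))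
    (hsymb : ∀ x y, (inner ℝ (Hb x) y : ℝ) = (inner ℝ x (Hb y) : ℝ))
    (hpsda : ∀ x, 0 ≤ (inner ℝ x (Ha x) : ℝ))
    (hpsdb : ∀ x, 0 ≤ (inner ℝ x (Hb x) : ℝ))
    (hlama : ∀ x : EuclideanSpace ℝ (Fin d), (inner ℝ x (Ha x) : ℝ) ≤ lama * ‖x‖ ^ 2)
    (hlamb : ∀ x : EuclideanSpace ℝ (Fin d), (inner ℝ x (Hb x) : ℝ) ≤ lamb * ‖x‖ ^ 2)
    (hint_v : Integrable (fun ω => g ω - M ω (g ω)) P)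
    (hint_qa : Integrable (fun ω =>
        (inner ℝ (M ω (g ω)) (Ha (M ω (g ω))) : ℝ) - (inner ℝ (g ω) (Ha (g ω)) : ℝ)) P)
    (hint_qb : Integrable (fun ω =>
        (inner ℝ (M ω (g ω)) (Hb (M ω (g ω))) : ℝ) - (inner ℝ (g ω) (Hb (g ω)) : ℝ)) P)
    (hint_norm : Integrable (fun ω => ‖g ω‖ ^ 2) P)
    (hint_cosa : Integrable (fun ω => ‖g ω‖ *
        ((inner ℝ ga (g ω) : ℝ) / (‖ga‖ * ‖g ω‖)
          - (inner ℝ ga (M ω (g ω)) : ℝ) / (‖ga‖ * ‖M ω (g ω)‖))) P)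
    (hint_cosb : Integrable (fun ω => ‖g ω‖ *
        ((inner ℝ gb (g ω) : ℝ) / (‖gb‖ * ‖g ω‖)
          - (inner ℝ gb (M ω (g ω)) : ℝ) / (‖gb‖ * ‖M ω (g ω)‖))) P)
    (hcond :
      (∫ ω, ‖g ω‖ *
          ((inner ℝ ga (g ω) : ℝ) / (‖ga‖ * ‖g ω‖)
            - (inner ℝ ga (M ω (g ω)) : ℝ) / (‖ga‖ * ‖M ω (g ω)‖)) ∂P)
        > (‖gb‖ / ‖ga‖) * (∫ ω, ‖g ω‖ *
            ((inner ℝ gb (g ω) : ℝ) / (‖gb‖ * ‖g ω‖)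
              - (inner ℝ gb (M ω (g ω)) : ℝ) / (‖gb‖ * ‖M ω (g ω)‖)) ∂P)
          + (∫ ω, ‖g ω‖ ^ 2 ∂P) / ‖ga‖) :
    (η * (inner ℝ ga (∫ ω, (g ω - M ω (g ω)) ∂P) : ℝ)
        + η ^ 2 / 2 * ∫ ω,
            ((inner ℝ (M ω (g ω)) (Ha (M ω (g ω))) : ℝ) - (inner ℝ (g ω) (Ha (g ω)) : ℝ)) ∂P)
      > (η * (inner ℝ gb (∫ ω, (g ω - M ω (g ω)) ∂P) : ℝ)
        + η ^ 2 / 2 * ∫ ω,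
            ((inner ℝ (M ω (g ω)) (Hb (M ω (g ω))) : ℝ) - (inner ℝ (g ω) (Hb (g ω)) : ℝ)) ∂P) := by
  classical
  have hM : ∀ ω (x : EuclideanSpace ℝ (Fin d)), ‖M ω x‖ = ‖x‖ := by
    intro ω x
    have h := horth ω x x
    rw [real_inner_self_eq_norm_sq, real_inner_self_eq_norm_sq] at h
    nlinarith [norm_nonneg (M ω x), norm_nonneg x]
  set v : EuclideanSpace ℝ (Fin d) := ∫ ω, (g ω - M ω (g ω)) ∂P with hv
  set N : ℝ := ∫ ω, ‖g ω‖ ^ 2 ∂P with hN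
  have hN0 : 0 ≤ N := integral_nonneg fun ω => by positivity
  have hcos : ∀ (c : EuclideanSpace ℝ (Fin d)), c ≠ 0 →
      (∫ ω, ‖g ω‖ * ((inner ℝ c (g ω) : ℝ) / (‖c‖ * ‖g ω‖)
          - (inner ℝ c (M ω (g ω)) : ℝ) / (‖c‖ * ‖M ω (g ω)‖)) ∂P)
        = (inner ℝ c v : ℝ) / ‖c‖ := by
    intro c hc
    have hceq : ∀ᵐ ω ∂P, ‖g ω‖ * ((inner ℝ c (g ω) : ℝ) / (‖c‖ * ‖g ω‖)
        - (inner ℝ c (M ω (g ω)) : ℝ) / (‖c‖ * ‖M ω (g ω)‖))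
        = (inner ℝ c (g ω - M ω (g ω)) : ℝ) / ‖c‖ := by
      filter_upwards [hg0] with ω hω
      have h1 : ‖g ω‖ ≠ 0 := norm_ne_zero_iff.mpr hω
      have h2 : ‖M ω (g ω)‖ = ‖g ω‖ := hM ω _
      have hc' : ‖c‖ ≠ 0 := norm_ne_zero_iff.mpr hc
      rw [inner_sub_right, h2]
      field_simp
    rw [integral_congr_ae hceq, integral_div, hv, integral_inner hint_v]
  rw [hcos ga hga, hcos gb hgb] at hcond
  have hga' : (0:ℝ) < ‖ga‖ := norm_pos_iff.mpr hga
  have hgb' : (0:ℝ) < ‖gb‖ := norm_pos_iff.mpr hgb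
  set A : ℝ := (inner ℝ ga v : ℝ) with hA'
  set B : ℝ := (inner ℝ gb v : ℝ) with hB'
  have hA : B + N < A := by
    have h1 : ‖gb‖ / ‖ga‖ * (B / ‖gb‖) = B / ‖ga‖ := by
      field_simp
    rw [h1, ← add_div] at hcond
    exact (div_lt_div_iff_of_pos_right hga').mp hcond
  -- bound on quadratic parts
  have hQ : (∫ ω, ((inner ℝ (M ω (g ω)) (Hb (M ω (g ω))) : ℝ)
        - (inner ℝ (g ω) (Hb (g ω)) : ℝ)) ∂P)
      - (∫ ω, ((inner ℝ (M ω (g ω)) (Ha (M ω (g ω))) : ℝ)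
        - (inner ℝ (g ω) (Ha (g ω)) : ℝ)) ∂P) ≤ (lama + lamb) * N := by
    rw [← integral_sub hint_qb hint_qa]
    have hle : ∀ ω, ((inner ℝ (M ω (g ω)) (Hb (M ω (g ω))) : ℝ)
          - (inner ℝ (g ω) (Hb (g ω)) : ℝ))
        - ((inner ℝ (M ω (g ω)) (Ha (M ω (g ω))) : ℝ)
          - (inner ℝ (g ω) (Ha (g ω)) : ℝ)) ≤ (lama + lamb) * ‖g ω‖ ^ 2 := by
      intro ω
      have h1 : (inner ℝ (M ω (g ω)) (Hb (M ω (g ω))) : ℝ) ≤ lamb * ‖g ω‖ ^ 2 := by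
        have := hlamb (M ω (g ω)); rwa [hM ω (g ω)] at this
      have h2 : (inner ℝ (g ω) (Ha (g ω)) : ℝ) ≤ lama * ‖g ω‖ ^ 2 := hlama (g ω)
      have h3 := hpsdb (g ω)
      have h4 := hpsda (M ω (g ω))
      nlinarith
    calc (∫ ω, (((inner ℝ (M ω (g ω)) (Hb (M ω (g ω))) : ℝ)
          - (inner ℝ (g ω) (Hb (g ω)) : ℝ))
        - ((inner ℝ (M ω (g ω)) (Ha (M ω (g ω))) : ℝ)
          - (inner ℝ (g ω) (Ha (g ω)) : ℝ))) ∂P)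
        ≤ ∫ ω, (lama + lamb) * ‖g ω‖ ^ 2 ∂P :=
          integral_mono (hint_qb.sub hint_qa) (hint_norm.const_mul _) hle
      _ = (lama + lamb) * N := by rw [hN, integral_const_mul]
  have hmax : (0:ℝ) < max lama lamb := lt_max_of_lt_left hlama0
  have hη2 : η * (lama + lamb) ≤ 2 := by
    have h1 : η * max lama lamb ≤ 1 := (le_div_iff₀ hmax).mp hηle
    have h2 : lama ≤ max lama lamb := le_max_left _ _
    have h3 : lamb ≤ max lama lamb := le_max_right _ _
    nlinarith
  set Qa : ℝ := ∫ ω, ((inner ℝ (M ω (g ω)) (Ha (M ω (g ω))) : ℝ)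
      - (inner ℝ (g ω) (Ha (g ω)) : ℝ)) ∂P
  set Qb : ℝ := ∫ ω, ((inner ℝ (M ω (g ω)) (Hb (M ω (g ω))) : ℝ)
      - (inner ℝ (g ω) (Hb (g ω)) : ℝ)) ∂P
  have key : 0 ≤ η * (2 - η * (lama + lamb)) * N := by
    have h0 : 0 ≤ 2 - η * (lama + lamb) := by linarith
    exact mul_nonneg (mul_nonneg hη.le h0) hN0
  have step1 : η ^ 2 / 2 * (Qb - Qa) ≤ η ^ 2 / 2 * ((lama + lamb) * N) :=
    mul_le_mul_of_nonneg_left hQ (by positivity : (0:ℝ) ≤ η ^ 2 / 2)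
  have step2 : η ^ 2 / 2 * ((lama + lamb) * N) ≤ η * N := by nlinarith [key]
  have step3 : η * (B + N) < η * A := mul_lt_mul_of_pos_left hA hη
  nlinarith [step1, step2, step3]
end
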